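/- Let K be a class of filters that is F₁-composable and F_ω-steady, X a topological space with topology τ, and B a bornology on X. If the filter Γ_B(X) on τ generated by the sets V(B) = {U ∈ τ : B ⊆ U} (B ∈ B) belongs to K, then C_B(X) is a K-space, i.e., the neighborhood filter of every point of C_B(X) belongs to K. -/

import Mathlib

/-- `𝓑` is a bornology on `X`: an ideal of subsets of `X` covering `X`. -/
structure IsBornology {X : Type*} (𝓑 : Set (Set X)) : Prop where
  covers : ∀ x : X, ∃ B ∈ 𝓑, x ∈ B
  subset_mem : ∀ ⦃A B : Set X⦄, A ⊆ B → B ∈ 𝓑 → A ∈ 𝓑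
  union_mem : ∀ ⦃A B : Set X⦄, A ∈ 𝓑 → B ∈ 𝓑 → A ∪ B ∈ 𝓑

/-- `𝓑₀` is a compact base for the bornology `𝓑`: a cofinal subfamily consisting of
compact sets. -/
def IsCompactBase {X : Type*} [TopologicalSpace X] (𝓑 𝓑₀ : Set (Set X)) : Prop :=
  𝓑₀ ⊆ 𝓑 ∧ (∀ B ∈ 𝓑₀, IsCompact B) ∧ ∀ B ∈ 𝓑, ∃ B₀ ∈ 𝓑₀, B ⊆ B₀
/-- The topology of uniform convergence on members of `𝓑` on the space `C(X, ℝ)` of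
continuous real-valued functions: basic neighborhoods of `f` are the sets
`⟨B, ε⟩[f] = {g : ∀ x ∈ B, |f x - g x| < ε}` for `B ∈ 𝓑`, `ε > 0`. -/
def CBtop (X : Type*) [TopologicalSpace X] (𝓑 : Set (Set X)) : TopologicalSpace C(X, ℝ) :=
  TopologicalSpace.induced (fun f => UniformOnFun.ofFun 𝓑 ⇑f)
    (UniformOnFun.topologicalSpace X ℝ 𝓑)
universe u

/-- The image filter `R(F) = {R[F₀] : F₀ ∈ F}↑` of a filter `F` under a relation `R`. -/
def relMap {C D : Type*} (R : C → D → Prop) (F : Filter C) : Filter D :=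
  F.lift' fun s => {d | ∃ c ∈ s, R c d}

/-- A class of filters `K` is `F₁`-composable if for every relation `R ⊆ C × D` and
every proper filter `F ∈ K` on `C`, if `R(F)` is a proper filter on `D` then
`R(F) ∈ K`. -/
def F1Composable (K : (C : Type u) → Filter C → Prop) : Prop :=
  ∀ (C D : Type u) (R : C → D → Prop) (F : Filter C), F.NeBot → K C F →
    (relMap R F).NeBot → K D (relMap R F)

/-- A class of filters `K` is `F_ω`-steady if for every proper filter `F ∈ K` and
every countably based proper filter `G` meshing with `F`, the supremum
`F ∨ G = {F₀ ∩ G₀}↑` (which is `F ⊓ G` in Mathlib's order on filters) belongs to `K`. -/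
def FOmegaSteady (K : (C : Type u) → Filter C → Prop) : Prop :=
  ∀ (C : Type u) (F G : Filter C), F.NeBot → K C F → G.NeBot →
    G.IsCountablyGenerated → (∀ s ∈ F, ∀ t ∈ G, (s ∩ t).Nonempty) → K C (F ⊓ G)

/-- The filter `Γ_𝓑(X)` on the set `τ` of open sets of `X`, generated by the sets
`V(B) = {U ∈ τ : B ⊆ U}` for `B ∈ 𝓑`. -/
def GammaB {X : Type u} [TopologicalSpace X] (𝓑 : Set (Set X)) :
    Filter {U : Set X // IsOpen U} :=
  Filter.generate {S | ∃ B ∈ 𝓑, S = {U : {U : Set X // IsOpen U} | B ⊆ ↑U}}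

/-!
Write `τ` for the open sets of `X`. Composability applied to the projection `τ × ℕ → τ` moves
`Γ_𝓑(X)` to `Γ_𝓑(X) × ⊤` on `τ × ℕ`, and steadiness against the countably based filter
`⊤ × atTop` upgrades it to `Γ_𝓑(X) × atTop`. The image of this filter under the relation
"`g` is `1/(n+1)`-close to `f` on `U`" is exactly the neighborhood filter of `f` in `C_𝓑(X)`:
a basic neighborhood `⟨B, 1/(n+1)⟩[f]` is recovered from the pair
`({x | |g x - f x| < 1/(n+1)}, n)` for each of its members `g`, and that set is open and
contains `B`. A final application of composability gives the theorem. If `X` is empty, `C(X, ℝ)`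
is a point and composability applied to the total relation suffices.
-/

open Filter Topology

section RelMap

variable {C D : Type*}

theorem relMap_hasBasis {ι : Sort*} {p : ι → Prop} {s : ι → Set C} {F : Filter C}
    (R : C → D → Prop) (h : F.HasBasis p s) :
    (relMap R F).HasBasis p fun i => {d | ∃ c ∈ s i, R c d} :=
  h.lift' fun _ _ hst _ ⟨c, hc, hR⟩ => ⟨c, hst hc, hR⟩

theorem relMap_eq_comap (φ : D → C) (F : Filter C) :
    relMap (fun c d => φ d = c) F = comap φ F := by
  rw [comap_eq_lift', relMap]
  congr 1
  ext s d
  exact ⟨by rintro ⟨_, hc, rfl⟩; exact hc, fun h => ⟨φ d, h, rfl⟩⟩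

theorem relMap_true (F : Filter C) [F.NeBot] : relMap (fun (_ : C) (_ : D) => True) F = ⊤ :=
  top_unique <| le_lift'.2 fun _ hs =>
    let ⟨c, hc⟩ := nonempty_of_mem hs
    mem_top.2 <| Set.eq_univ_of_forall fun _ => ⟨c, hc, trivial⟩

end RelMap

section FilterClass

variable {K : (C : Type u) → Filter C → Prop}

theorem F1Composable.comap (hK1 : F1Composable K) {C D : Type u} (φ : D → C) {F : Filter C}
    [F.NeBot] (hF : K C F) (hne : (comap φ F).NeBot) : K D (comap φ F) := by
  rw [← relMap_eq_comap] at hne ⊢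
  exact hK1 C D _ F ‹_› hF hne

theorem F1Composable.top (hK1 : F1Composable K) {C D : Type u} [Nonempty D] {F : Filter C}
    [F.NeBot] (hF : K C F) : K D ⊤ := by
  have h := relMap_true (D := D) F
  exact h ▸ hK1 C D _ F ‹_› hF (h ▸ inferInstance)

theorem FOmegaSteady.prod (hK1 : F1Composable K) (hK2 : FOmegaSteady K) {C : Type u} {D : Type}
    {F : Filter C} {G : Filter D} [F.NeBot] [G.NeBot] [G.IsCountablyGenerated] (hF : K C F) :
    K (C × D) (F ×ˢ G) := by
  have : Nonempty C := F.nonempty_of_neBot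
  have : Nonempty D := G.nonempty_of_neBot
  rw [prod_eq_inf]
  refine hK2 _ _ _ comap_fst_neBot (hK1.comap Prod.fst hF comap_fst_neBot) comap_snd_neBot
    inferInstance (inf_neBot_iff.1 ?_)
  rw [← prod_eq_inf]
  infer_instance

end FilterClass

theorem IsBornology.directedOn {X : Type*} {𝓑 : Set (Set X)} (hB : IsBornology 𝓑) :
    DirectedOn (· ⊆ ·) 𝓑 := fun _ h₁ _ h₂ =>
  ⟨_, hB.union_mem h₁ h₂, Set.subset_union_left, Set.subset_union_right⟩

section GammaB

variable {X : Type u} [TopologicalSpace X] {𝓑 : Set (Set X)}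

theorem gammaB_eq_biInf (𝓑 : Set (Set X)) :
    GammaB 𝓑 = ⨅ B ∈ 𝓑, 𝓟 {U : {U : Set X // IsOpen U} | B ⊆ U} := by
  have hV : {S | ∃ B ∈ 𝓑, S = {U : {U : Set X // IsOpen U} | B ⊆ U}}
      = (fun B : Set X => {U : {U : Set X // IsOpen U} | B ⊆ U}) '' 𝓑 := by
    ext S
    simp only [Set.mem_ofPred_eq, Set.mem_image, eq_comm]
  rw [GammaB, generate_eq_biInf, hV, iInf_image]

theorem gammaB_hasBasis (hB : IsBornology 𝓑) (hne : 𝓑.Nonempty) :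
    (GammaB 𝓑).HasBasis (· ∈ 𝓑) fun B => {U : {U : Set X // IsOpen U} | B ⊆ U} :=
  gammaB_eq_biInf 𝓑 ▸ hasBasis_biInf_principal
    (fun _ h₁ _ h₂ =>
      let ⟨B, hB, h₁B, h₂B⟩ := hB.directedOn _ h₁ _ h₂
      ⟨B, hB, fun _ hBU => h₁B.trans hBU, fun _ hBU => h₂B.trans hBU⟩) hne

instance gammaB_neBot (𝓑 : Set (Set X)) : (GammaB 𝓑).NeBot :=
  neBot_of_le (f := pure ⟨Set.univ, isOpen_univ⟩) <| by
    rw [GammaB, le_generate_iff]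
    rintro _ ⟨B, -, rfl⟩
    exact Set.subset_univ B

end GammaB

section UniformBall

variable {X : Type u} [TopologicalSpace X]

def uniformBallRel (f : C(X, ℝ)) (p : {U : Set X // IsOpen U} × ℕ) (g : C(X, ℝ)) : Prop :=
  ∀ x ∈ p.1.1, dist (g x) (f x) < 1 / (p.2 + 1)

theorem nhds_CBtop_hasBasis {𝓑 : Set (Set X)} (hB : IsBornology 𝓑) (hne : 𝓑.Nonempty)
    (f : C(X, ℝ)) :
    (@nhds _ (CBtop X 𝓑) f).HasBasis (fun Bn : Set X × ℕ => Bn.1 ∈ 𝓑 ∧ True)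
      fun Bn => {g : C(X, ℝ) | ∀ x ∈ Bn.1, dist (g x) (f x) < 1 / (Bn.2 + 1)} :=
  nhds_induced (T := UniformOnFun.topologicalSpace X ℝ 𝓑) _ f ▸
    (UniformOnFun.hasBasis_nhds_of_basis X ℝ 𝓑 _ hne hB.directedOn
      Metric.uniformity_basis_dist_inv_nat_succ).comap _

theorem setOf_exists_uniformBallRel (f : C(X, ℝ)) (B : Set X) (n : ℕ) :
    {g | ∃ p ∈ {U : {U : Set X // IsOpen U} | B ⊆ U} ×ˢ Set.Ici n, uniformBallRel f p g}
      = {g : C(X, ℝ) | ∀ x ∈ B, dist (g x) (f x) < 1 / (n + 1)} := by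
  ext g
  constructor
  · rintro ⟨⟨U, m⟩, ⟨hBU, hm⟩, hg⟩ x hx
    refine (hg x (hBU hx)).trans_le (one_div_le_one_div_of_le (by positivity) ?_)
    exact_mod_cast Nat.succ_le_succ hm
  · intro hg
    have hU : IsOpen {x | dist (g x) (f x) < 1 / (n + 1)} :=
      isOpen_lt (g.continuous.dist f.continuous) continuous_const
    exact ⟨(⟨_, hU⟩, n), ⟨hg, Set.self_mem_Ici⟩, fun _ hx => hx⟩

theorem relMap_uniformBallRel {𝓑 : Set (Set X)} (hB : IsBornology 𝓑) (hne : 𝓑.Nonempty)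
    (f : C(X, ℝ)) :
    relMap (uniformBallRel f) (GammaB 𝓑 ×ˢ atTop) = @nhds _ (CBtop X 𝓑) f := by
  ext t
  rw [(relMap_hasBasis _ ((gammaB_hasBasis hB hne).prod atTop_basis)).mem_iff,
    (nhds_CBtop_hasBasis hB hne f).mem_iff]
  simp only [setOf_exists_uniformBallRel]

end UniformBall

/-- If `K` is an `F₁`-composable and `F_ω`-steady class of filters and
`Γ_𝓑(X) ∈ K`, then `C_𝓑(X)` is a `K`-space: every neighborhood filter of a point of
`C_𝓑(X)` belongs to `K`. -/
theorem statement14 {X : Type u} [TopologicalSpace X]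
    (𝓑 : Set (Set X)) (hB : IsBornology 𝓑)
    (K : (C : Type u) → Filter C → Prop)
    (hK1 : F1Composable K) (hK2 : FOmegaSteady K)
    (hG : K _ (GammaB 𝓑)) :
    ∀ f : C(X, ℝ), K _ (@nhds _ (CBtop X 𝓑) f) := by
  intro f
  let _ := CBtop X 𝓑
  rcases isEmpty_or_nonempty X with hX | hX
  · rw [eq_top_of_neBot (𝓝 f)]
    exact hK1.top hG
  · obtain ⟨x⟩ := hX
    obtain ⟨B, hB₀, -⟩ := hB.covers x
    have hnhds := relMap_uniformBallRel hB ⟨B, hB₀⟩ f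
    exact hnhds ▸ hK1 _ _ _ _ inferInstance (hK2.prod hK1 hG) (hnhds ▸ inferInstance)
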